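/- arXiv:1606.01414 — 2 statements merged into one kernel-verified Lean document; each statement's English description precedes it below -/
import Mathlib

section
/- For even n, the group Quad(ℤ/nℤ, ℝ/ℤ) of quadratic forms from ℤ/nℤ to ℝ/ℤ is cyclic of order 2n, generated by the form q(m) = m²/(2n) mod ℤ. -/
/-!
A quadratic form `γ` satisfies `γ (m • x) = m² • γ x`, so on the cyclic group `ℤ/nℤ` it is
determined by `t = γ 1`. Comparing `γ (n • 1) = γ 0 = 0` with `γ ((n + 1) • 1) = γ 1` gives
`n² • t = 0` and `(n + 1)² • t = t`, hence `2n • t = 0`: `t` lies in the `2n`-torsion of `ℝ/ℤ`,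
the cyclic group generated by `1/(2n)`, which is `q 1` for `q m = m²/(2n)`. Conversely `q` is
quadratic because it is induced by the quadratic form `a ↦ a²/(2n)` on `ℤ`; this uses that `n` is
even, so that `(a + n c)²/(2n) - a²/(2n) = a c + (n/2) c²` is an integer.
-/

variable {A B : Type*} [AddCommGroup A] [AddCommGroup B]

/-- The polarization of a map between abelian groups. -/
def polz (γ : A → B) (x y : A) : B := γ (x + y) - γ x - γ y

/-- A quadratic form between abelian groups: even, with bilinear polarization. -/
def IsQuadratic (γ : A → B) : Prop :=
  (∀ a, γ a = γ (-a)) ∧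
  (∀ x x' y, polz γ (x + x') y = polz γ x y + polz γ x' y) ∧
  (∀ x y y', polz γ x (y + y') = polz γ x y + polz γ x y')

/-- The quadratic form `m ↦ m²/(2n)` on `ℤ/nℤ` with values in `ℝ/ℤ`. -/
noncomputable def qGenEven (n : ℕ) : ZMod n → AddCircle (1 : ℝ) :=
  fun m => (((m.val : ℝ) ^ 2 / (2 * n) : ℝ) : AddCircle (1 : ℝ))

namespace IsQuadratic

variable {A' C : Type*} [AddCommGroup A'] [AddCommGroup C] {γ : A → B}

theorem polz_add_left (h : IsQuadratic γ) (x x' y : A) :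
    polz γ (x + x') y = polz γ x y + polz γ x' y :=
  h.2.1 x x' y

theorem polz_add_right (h : IsQuadratic γ) (x y y' : A) :
    polz γ x (y + y') = polz γ x y + polz γ x y' :=
  h.2.2 x y y'

theorem polz_zero_left (h : IsQuadratic γ) (y : A) : polz γ 0 y = 0 := by
  simpa using h.polz_add_left 0 0 y

theorem map_zero (h : IsQuadratic γ) : γ 0 = 0 := by
  simpa [polz] using h.polz_zero_left 0

theorem polz_self (h : IsQuadratic γ) (x : A) : polz γ x x = 2 • γ x := by
  have hcancel : polz γ x (x + -x) = 0 := by simp [polz, h.map_zero]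
  have hneg : polz γ x (-x) = -(γ x + γ x) := by
    simp only [polz, add_neg_cancel, h.map_zero, ← h.1 x]; abel
  rw [h.polz_add_right, hneg, add_neg_eq_zero] at hcancel
  rw [two_nsmul, hcancel]

theorem polz_nsmul_left (h : IsQuadratic γ) (m : ℕ) (x y : A) :
    polz γ (m • x) y = m • polz γ x y := by
  induction m with
  | zero => simpa using h.polz_zero_left y
  | succ m ih => rw [succ_nsmul, h.polz_add_left, ih, succ_nsmul]

theorem map_nsmul (h : IsQuadratic γ) (m : ℕ) (x : A) : γ (m • x) = (m ^ 2) • γ x := by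
  induction m with
  | zero => simpa using h.map_zero
  | succ m ih =>
    have hexpand : γ (m • x + x) = polz γ (m • x) x + γ (m • x) + γ x := by
      simp only [polz]; abel
    rw [succ_nsmul, hexpand, h.polz_nsmul_left, h.polz_self, ih,
      show (m + 1) ^ 2 = m * 2 + m ^ 2 + 1 by ring, add_nsmul, add_nsmul, mul_nsmul', one_nsmul]

theorem two_mul_nsmul_map_eq_zero (h : IsQuadratic γ) {n : ℕ} {x : A} (hx : n • x = 0) :
    (2 * n) • γ x = 0 := by
  have hsq : (n ^ 2) • γ x = 0 := by rw [← h.map_nsmul, hx, h.map_zero]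
  have hsucc : ((n + 1) ^ 2) • γ x = γ x := by rw [← h.map_nsmul, succ_nsmul, hx, zero_add]
  rwa [show (n + 1) ^ 2 = n ^ 2 + 2 * n + 1 by ring, add_nsmul, add_nsmul, hsq, one_nsmul,
    zero_add, add_eq_right] at hsucc

theorem map_eq_val_sq_nsmul {n : ℕ} [NeZero n] {γ : ZMod n → B} (h : IsQuadratic γ)
    (x : ZMod n) : γ x = (x.val ^ 2) • γ 1 := by
  conv_lhs => rw [← ZMod.natCast_zmod_val x, ← nsmul_one]
  exact h.map_nsmul _ _

theorem addMonoidHom_comp (h : IsQuadratic γ) (g : B →+ C) : IsQuadratic (g ∘ γ) := by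
  have hpolz : ∀ x y, polz (g ∘ γ) x y = g (polz γ x y) := by simp [polz]
  refine ⟨fun a => congrArg g (h.1 a), fun x x' y => ?_, fun x y y' => ?_⟩ <;>
    simp only [hpolz, h.polz_add_left, h.polz_add_right, map_add]

theorem comp_addMonoidHom (h : IsQuadratic γ) (φ : A' →+ A) : IsQuadratic (γ ∘ φ) := by
  have hpolz : ∀ x y, polz (γ ∘ φ) x y = polz γ (φ x) (φ y) := by simp [polz]
  refine ⟨fun a => ?_, fun x x' y => ?_, fun x y y' => ?_⟩ <;>
    simp only [Function.comp_apply, hpolz, map_neg, map_add, ← h.1, h.polz_add_left,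
      h.polz_add_right]

theorem of_comp_surjective {φ : A' →+ A} (hφ : Function.Surjective φ)
    (h : IsQuadratic (γ ∘ φ)) : IsQuadratic γ := by
  have hpolz : ∀ x y, polz γ (φ x) (φ y) = polz (γ ∘ φ) x y := by simp [polz]
  refine ⟨fun a => ?_, fun x x' y => ?_, fun x y y' => ?_⟩
  · obtain ⟨a, rfl⟩ := hφ a
    simpa using h.1 a
  · obtain ⟨x, rfl⟩ := hφ x
    obtain ⟨x', rfl⟩ := hφ x'
    obtain ⟨y, rfl⟩ := hφ y
    simpa only [← map_add, hpolz] using h.polz_add_left x x' y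
  · obtain ⟨x, rfl⟩ := hφ x
    obtain ⟨y, rfl⟩ := hφ y
    obtain ⟨y', rfl⟩ := hφ y'
    simpa only [← map_add, hpolz] using h.polz_add_right x y y'

end IsQuadratic

theorem isQuadratic_mul_sq {R : Type*} [CommRing R] (c : R) :
    IsQuadratic (fun x : R => c * x ^ 2) := by
  refine ⟨fun a => by ring, fun x x' y => ?_, fun x y y' => ?_⟩ <;> simp only [polz] <;> ring

theorem AddCircle.exists_eq_nsmul_period_div_of_nsmul_eq_zero {𝕜 : Type*} [Field 𝕜]
    [LinearOrder 𝕜] [IsStrictOrderedRing 𝕜] {p : 𝕜} [Fact (0 < p)] {N : ℕ} (hN : 0 < N)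
    {u : AddCircle p} (hu : N • u = 0) : ∃ k : ℕ, u = k • ((p / N : 𝕜) : AddCircle p) := by
  obtain ⟨k, -, rfl⟩ := (AddCircle.nsmul_eq_zero_iff hN).1 hu
  exact ⟨k, AddCircle.natCast_div_mul_eq_nsmul _ _ p k⟩

section qGenEven

variable {n : ℕ} [NeZero n]

theorem qGenEven_intCast (hn : Even n) (a : ℤ) :
    qGenEven n a = (((a : ℝ) ^ 2 / (2 * n) : ℝ) : AddCircle (1 : ℝ)) := by
  obtain ⟨m, rfl⟩ := hn
  have hm : (m : ℝ) ≠ 0 := Nat.cast_ne_zero.2 fun hm => NeZero.ne (m + m) (by simp [hm])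
  have hval : (((a : ZMod (m + m)).val : ℤ) : ℝ) = a - (m + m : ℕ) * (a / (m + m : ℕ) : ℤ) := by
    rw [ZMod.val_intCast, Int.emod_def]; push_cast; ring
  generalize a / ((m + m : ℕ) : ℤ) = c at hval
  rw [qGenEven, ← Int.cast_natCast, hval, ← sub_eq_zero, ← AddCircle.coe_sub,
    AddCircle.coe_eq_zero_iff]
  -- `(a - n c)² - a² = 2n (m c² - a c)` with `n = 2m`
  refine ⟨m * c ^ 2 - a * c, ?_⟩
  rw [zsmul_eq_mul, mul_one]
  push_cast
  field_simp
  ring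

theorem qGenEven_one (hn : Even n) :
    qGenEven n 1 = ((1 / (2 * n : ℕ) : ℝ) : AddCircle (1 : ℝ)) := by
  simpa using qGenEven_intCast hn 1

theorem addOrderOf_qGenEven_one (hn : Even n) :
    addOrderOf (qGenEven n 1) = 2 * n := by
  rw [qGenEven_one hn]
  exact AddCircle.addOrderOf_period_div (by have := NeZero.pos n; omega)

theorem isQuadratic_qGenEven (hn : Even n) : IsQuadratic (qGenEven n) := by
  have hlift : qGenEven n ∘ Int.castAddHom (ZMod n) =
      QuotientAddGroup.mk' _ ∘ (fun x : ℝ => (2 * n : ℝ)⁻¹ * x ^ 2) ∘ Int.castAddHom ℝ := by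
    funext a
    simp [qGenEven_intCast hn, div_eq_inv_mul]
  refine IsQuadratic.of_comp_surjective (φ := Int.castAddHom (ZMod n))
    ZMod.intCast_surjective ?_
  rw [hlift]
  exact ((isQuadratic_mul_sq _).addMonoidHom_comp _).comp_addMonoidHom _

end qGenEven

/-- For even `n`, the group of quadratic forms `ℤ/nℤ → ℝ/ℤ` is cyclic of order `2n`,
generated by `m ↦ m²/(2n)`. -/
theorem quadGroup_zmod_even_cyclic (n : ℕ) (hn : Even n) (hpos : 0 < n) :
    IsQuadratic (qGenEven n) ∧
    (2 * n) • qGenEven n = 0 ∧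
    (∀ m : ℕ, 0 < m → m < 2 * n → m • qGenEven n ≠ 0) ∧
    (∀ γ : ZMod n → AddCircle (1 : ℝ), IsQuadratic γ → ∃ k : ℕ, γ = k • qGenEven n) := by
  have : NeZero n := ⟨hpos.ne'⟩
  have hq := isQuadratic_qGenEven hn
  have hord := addOrderOf_qGenEven_one hn
  refine ⟨hq, ?_, fun m hm hm2n h => ?_, fun γ hγ => ?_⟩
  · funext x
    rw [Pi.smul_apply, hq.map_eq_val_sq_nsmul, smul_comm, ← hord, addOrderOf_nsmul_eq_zero,
      smul_zero, Pi.zero_apply]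
  · have := addOrderOf_le_of_nsmul_eq_zero hm
      (show m • qGenEven n 1 = 0 from congrFun h 1)
    omega
  · have htorsion : (2 * n) • γ 1 = 0 := hγ.two_mul_nsmul_map_eq_zero (by simp)
    obtain ⟨k, hk⟩ := AddCircle.exists_eq_nsmul_period_div_of_nsmul_eq_zero (by omega) htorsion
    refine ⟨k, funext fun x => ?_⟩
    rw [hγ.map_eq_val_sq_nsmul, hk, ← qGenEven_one hn, Pi.smul_apply,
      hq.map_eq_val_sq_nsmul x, smul_comm]
end

section
/- If A is a finite abelian group, then the number of quadratic forms from A to ℝ/ℤ equals |A/2A| · |S²(A)|, where S²(A) is the second symmetric power of A as a ℤ-module. -/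
variable {A B : Type*} [AddCommGroup A] [AddCommGroup B]

lemma polz_add_fun (f g : A → B) (x y : A) :
    polz (f + g) x y = polz f x y + polz g x y := by
  simp only [polz, Pi.add_apply]; abel

lemma polz_neg_fun (f : A → B) (x y : A) :
    polz (-f) x y = - polz f x y := by
  simp only [polz, Pi.neg_apply]; abel

/-- The group of `ℝ/ℤ`-valued quadratic forms on `A`. -/
noncomputable def QuadGroup (A : Type*) [AddCommGroup A] : AddSubgroup (A → AddCircle (1 : ℝ)) where
  carrier := {γ | IsQuadratic γ}
  zero_mem' := ⟨fun _ => rfl, fun _ _ _ => by simp [polz], fun _ _ _ => by simp [polz]⟩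
  add_mem' := by
    rintro f g ⟨hf1, hf2, hf3⟩ ⟨hg1, hg2, hg3⟩
    refine ⟨fun a => by simp only [Pi.add_apply, hf1 a, hg1 a], fun x x' y => ?_,
      fun x y y' => ?_⟩
    · rw [polz_add_fun, polz_add_fun, polz_add_fun, hf2, hg2]; abel
    · rw [polz_add_fun, polz_add_fun, polz_add_fun, hf3, hg3]; abel
  neg_mem' := by
    rintro f ⟨hf1, hf2, hf3⟩
    refine ⟨fun a => by simp only [Pi.neg_apply, hf1 a], fun x x' y => ?_, fun x y y' => ?_⟩
    · rw [polz_neg_fun, polz_neg_fun, polz_neg_fun, hf2]; abel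
    · rw [polz_neg_fun, polz_neg_fun, polz_neg_fun, hf3]; abel

/-- The subgroup `2A = {2a : a ∈ A}`. -/
def twoSub (A : Type*) [AddCommGroup A] : AddSubgroup A :=
  (zsmulAddGroupHom 2 : A →+ A).range

open TensorProduct in
/-- The second symmetric power `S²(A) = (A ⊗ A)/⟨a⊗b - b⊗a⟩` of `A` as a ℤ-module. -/
abbrev symPower2 (A : Type*) [AddCommGroup A] :=
  (TensorProduct ℤ A A) ⧸
    (Submodule.span ℤ {x : TensorProduct ℤ A A | ∃ a b : A, x = a ⊗ₜ[ℤ] b - b ⊗ₜ[ℤ] a})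

/-!
Polarization `γ ↦ b_γ` is a homomorphism from `Quad(A, ℝ/ℤ)` to the symmetric biadditive forms,
i.e. to `Hom(S²A, ℝ/ℤ)`. Its kernel consists of the even additive maps, i.e. of
`Hom(A/2A, ℝ/ℤ)`. It is onto: on `ℤ/n` a symmetric form `b` is the polarization of
`x ↦ x² β` for a suitable `β` with `2β = b(1,1)`; on `G × H` one adds the cross term
`b((g,0),(0,h))` to quadratic refinements on the factors; and the structure theorem reduces a
finite `A` to these two cases. A finite abelian group and its `ℝ/ℤ`-dual have the same order.
-/

open TensorProduct

local notation "𝕋" => AddCircle (1 : ℝ)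

lemma polz_comm (γ : A → B) (x y : A) : polz γ x y = polz γ y x := by
  simp only [polz, add_comm x y]; abel

lemma IsQuadratic.of_polz_eq {γ : A → B} (b : A →+ A →+ B) (heven : ∀ a, γ a = γ (-a))
    (h : ∀ x y, polz γ x y = b x y) : IsQuadratic γ :=
  ⟨heven, fun x x' y => by simp only [h, map_add, AddMonoidHom.add_apply],
    fun x y y' => by simp only [h, map_add]⟩

def IsQuadratic.polar {γ : A → B} (hγ : IsQuadratic γ) : A →+ A →+ B :=
  AddMonoidHom.mk' (fun x => AddMonoidHom.mk' (polz γ x) (hγ.2.2 x))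
    fun x x' => AddMonoidHom.ext (hγ.2.1 x x')

@[simp]
lemma IsQuadratic.polar_apply {γ : A → B} (hγ : IsQuadratic γ) (x y : A) :
    hγ.polar x y = polz γ x y := rfl

lemma polz_eq_zero_iff {γ : A → B} {x y : A} : polz γ x y = 0 ↔ γ (x + y) = γ x + γ y := by
  rw [polz, sub_sub, sub_eq_zero]

lemma symPower2_linearMap_ext {f g : symPower2 A →ₗ[ℤ] B}
    (h : ∀ x y : A, f (Submodule.Quotient.mk (x ⊗ₜ y)) = g (Submodule.Quotient.mk (x ⊗ₜ y))) :
    f = g :=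
  Submodule.linearMap_qext _ (TensorProduct.ext' h)

noncomputable def symPower2Lift :
    {b : A →+ A →+ B // ∀ x y, b x y = b y x} ≃ (symPower2 A →ₗ[ℤ] B) where
  toFun b := Submodule.liftQ _
    (TensorProduct.liftAddHom b.1 fun r x y => by
      rw [map_zsmul, AddMonoidHom.smul_apply, map_zsmul]).toIntLinearMap
    (Submodule.span_le.2 <| by
      rintro _ ⟨x, y, rfl⟩
      simp [b.2 x y])
  invFun L := ⟨AddMonoidHom.mk'
      (fun x => AddMonoidHom.mk' (fun y => L (Submodule.Quotient.mk (x ⊗ₜ y)))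
        fun y y' => by simp only [tmul_add, Submodule.Quotient.mk_add, map_add])
      fun x x' => AddMonoidHom.ext fun y => by
        simp only [AddMonoidHom.mk'_apply, AddMonoidHom.add_apply, add_tmul,
          Submodule.Quotient.mk_add, map_add],
    fun x y => congrArg L <| (Submodule.Quotient.eq _).2 <| Submodule.subset_span ⟨x, y, rfl⟩⟩
  left_inv b := by ext; simp
  right_inv L := symPower2_linearMap_ext fun x y => by simp

@[simp]
lemma symPower2Lift_mk_tmul (b : {b : A →+ A →+ B // ∀ x y, b x y = b y x}) (x y : A) :
    symPower2Lift b (Submodule.Quotient.mk (x ⊗ₜ y)) = b.1 x y := by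
  simp [symPower2Lift]

lemma two_zsmul_mk_twoSub (a : A) : (2 : ℤ) • (QuotientAddGroup.mk a : A ⧸ twoSub A) = 0 := by
  rw [← QuotientAddGroup.mk_zsmul, QuotientAddGroup.eq_zero_iff]
  exact ⟨a, rfl⟩

lemma AddMonoidHom.map_twoSub_eq_zero {f : A →+ B} (hf : ∀ a, f a = f (-a)) {x : A}
    (hx : x ∈ twoSub A) : f x = 0 := by
  obtain ⟨a, rfl⟩ := hx
  rw [zsmulAddGroupHom_apply, two_zsmul, map_add]
  nth_rw 1 [hf a]
  rw [← map_add, neg_add_cancel, map_zero]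

lemma isQuadratic_comp_mk (f : A ⧸ twoSub A →+ B) : IsQuadratic (f ∘ QuotientAddGroup.mk) := by
  refine IsQuadratic.of_polz_eq 0 (fun a => ?_) fun x y => ?_
  · have h : f a + f a = 0 := by rw [← two_zsmul, ← map_zsmul, two_zsmul_mk_twoSub, map_zero]
    simp only [Function.comp_apply, QuotientAddGroup.mk_neg, map_neg]
    exact eq_neg_of_add_eq_zero_left h
  · simp [polz]

lemma mem_quadGroup {γ : A → 𝕋} : γ ∈ QuadGroup A ↔ IsQuadratic γ := Iff.rfl

noncomputable def polarization (A : Type*) [AddCommGroup A] :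
    QuadGroup A →+ (symPower2 A →ₗ[ℤ] 𝕋) where
  toFun γ := symPower2Lift ⟨(mem_quadGroup.1 γ.2).polar, polz_comm (γ : A → 𝕋)⟩
  map_zero' := symPower2_linearMap_ext fun x y => by simp [polz]
  map_add' γ δ := symPower2_linearMap_ext fun x y => by simp [polz_add_fun]

@[simp]
lemma polarization_apply_mk_tmul (γ : QuadGroup A) (x y : A) :
    polarization A γ (Submodule.Quotient.mk (x ⊗ₜ y)) = polz (γ : A → 𝕋) x y := by
  simp [polarization]

lemma mem_ker_polarization {γ : QuadGroup A} :
    γ ∈ (polarization A).ker ↔ ∀ x y, polz (γ : A → 𝕋) x y = 0 := by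
  rw [AddMonoidHom.mem_ker]
  refine ⟨fun h x y => ?_, fun h => symPower2_linearMap_ext fun x y => by simp [h]⟩
  simpa using congr($h (Submodule.Quotient.mk (x ⊗ₜ y)))

noncomputable def kerPolarizationEquiv (A : Type*) [AddCommGroup A] :
    (polarization A).ker ≃ (A ⧸ twoSub A →+ 𝕋) where
  toFun γ := QuotientAddGroup.lift _
    (AddMonoidHom.mk' γ.1.1 fun _ _ => polz_eq_zero_iff.1 (mem_ker_polarization.1 γ.2 _ _))
    fun _ => AddMonoidHom.map_twoSub_eq_zero (mem_quadGroup.1 γ.1.2).1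
  invFun f := ⟨⟨f ∘ QuotientAddGroup.mk, isQuadratic_comp_mk f⟩,
    mem_ker_polarization.2 fun x y => by simp [polz]⟩
  left_inv _ := rfl
  right_inv _ := QuotientAddGroup.addMonoidHom_ext _ rfl

lemma Function.Periodic.eq_of_intCast_eq {α : Type*} {f : ℤ → α} {n : ℕ}
    (hf : Function.Periodic f n) {a c : ℤ} (h : (a : ZMod n) = c) : f a = f c := by
  obtain ⟨k, hk⟩ := (ZMod.intCast_eq_intCast_iff_dvd_sub a c n).1 h
  rw [show c = a + k * n by linarith]
  exact (hf.int_mul k a).symm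

lemma exists_two_zsmul_eq_and_mul_self_zsmul_eq_zero [DivisibleBy B ℤ] {t : B} {n : ℤ}
    (ht : n • t = 0) : ∃ β : B, (2 : ℤ) • β = t ∧ (n * n) • β = 0 := by
  set h := DivisibleBy.div t (2 : ℤ)
  have hh : (2 : ℤ) • h = t := DivisibleBy.div_cancel t two_ne_zero
  -- `β = (n + 1) • (t / 2)`: as `n (n + 1)` is even, `n² β` is a multiple of `n • t`
  obtain ⟨k, hk⟩ := Int.even_mul_succ_self n
  refine ⟨(n + 1) • h, ?_, ?_⟩
  · rw [smul_comm, hh, add_smul, ht, one_smul, zero_add]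
  · calc (n * n) • (n + 1) • h = (k * n * 2) • h := by
          rw [smul_smul, show n * n * (n + 1) = n * (n * (n + 1)) by ring, hk]; ring_nf
      _ = 0 := by rw [mul_smul, hh, mul_smul, ht, smul_zero]

def PolarizationSurjective (G N : Type*) [AddCommGroup G] [AddCommGroup N] : Prop :=
  ∀ b : G →+ G →+ N, (∀ x y, b x y = b y x) →
    ∃ γ : G → N, IsQuadratic γ ∧ ∀ x y, polz γ x y = b x y

namespace PolarizationSurjective

variable {G H : Type*} [AddCommGroup G] [AddCommGroup H]

lemma of_addEquiv (e : G ≃+ H) (hG : PolarizationSurjective G B) :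
    PolarizationSurjective H B := by
  intro b hb
  obtain ⟨γ, hγ, hpolz⟩ := hG ((b.comp e.toAddMonoidHom).compl₂ e.toAddMonoidHom)
    fun x y => hb _ _
  have hpolz' : ∀ x y, polz (γ ∘ e.symm) x y = b x y := fun x y => by
    simpa [polz] using hpolz (e.symm x) (e.symm y)
  exact ⟨γ ∘ e.symm, .of_polz_eq b (fun a => by simpa using hγ.1 (e.symm a)) hpolz', hpolz'⟩

lemma of_subsingleton [Subsingleton G] : PolarizationSurjective G B := by
  intro b _
  have hpolz : ∀ x y : G, polz 0 x y = b x y := fun x y => by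
    simp [polz, Subsingleton.elim x 0]
  exact ⟨0, .of_polz_eq b (fun _ => rfl) hpolz, hpolz⟩

lemma prod (hG : PolarizationSurjective G B) (hH : PolarizationSurjective H B) :
    PolarizationSurjective (G × H) B := by
  intro b hb
  set i₁ := AddMonoidHom.inl G H
  set i₂ := AddMonoidHom.inr G H
  obtain ⟨γ₁, hγ₁, hpolz₁⟩ := hG ((b.comp i₁).compl₂ i₁) fun x y => hb _ _
  obtain ⟨γ₂, hγ₂, hpolz₂⟩ := hH ((b.comp i₂).compl₂ i₂) fun x y => hb _ _
  set γ : G × H → B := fun p => γ₁ p.1 + γ₂ p.2 + b (i₁ p.1) (i₂ p.2)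
  have hsplit : ∀ p : G × H, i₁ p.1 + i₂ p.2 = p := fun p => by simp [i₁, i₂]
  have hb_expand : ∀ p q : G × H, b p q = b (i₁ p.1) (i₁ q.1) + b (i₁ p.1) (i₂ q.2) +
      b (i₁ q.1) (i₂ p.2) + b (i₂ p.2) (i₂ q.2) := fun p q => by
    conv_lhs => rw [← hsplit p, ← hsplit q]
    simp only [map_add, AddMonoidHom.add_apply]
    rw [hb (i₂ p.2) (i₁ q.1)]
    abel
  have hpolz : ∀ p q, polz γ p q = b p q := fun p q => by
    have h₁ := hpolz₁ p.1 q.1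
    have h₂ := hpolz₂ p.2 q.2
    simp only [polz, AddMonoidHom.compl₂_apply, AddMonoidHom.comp_apply] at h₁ h₂
    rw [hb_expand, ← h₁, ← h₂]
    simp only [polz, γ, Prod.fst_add, Prod.snd_add, map_add, AddMonoidHom.add_apply]
    abel
  refine ⟨γ, .of_polz_eq b (fun p => ?_) hpolz, hpolz⟩
  simp only [γ, Prod.fst_neg, Prod.snd_neg, map_neg, AddMonoidHom.neg_apply, neg_neg,
    ← hγ₁.1, ← hγ₂.1]

lemma directSum {ι : Type*} [Fintype ι] {M : ι → Type*} [∀ i, AddCommGroup (M i)]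
    (hM : ∀ i, PolarizationSurjective (M i) B) : PolarizationSurjective (DirectSum ι M) B := by
  refine Fintype.induction_empty_option (P := fun ι _ => ∀ (M : ι → Type _)
    [∀ i, AddCommGroup (M i)], (∀ i, PolarizationSurjective (M i) B) →
      PolarizationSurjective (DirectSum ι M) B) ?_ ?_ ?_ ι M hM
  · intro α β _ e ih M _ hM
    exact (ih _ fun a => hM (e a)).of_addEquiv (DirectSum.equivCongrLeft e.symm).symm
  · intro M _ _
    exact of_subsingleton
  · intro α _ ih M _ hM
    exact ((hM none).prod (ih _ fun i => hM (some i))).of_addEquiv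
      DirectSum.addEquivProdDirectSum.symm

lemma zmod [DivisibleBy B ℤ] (n : ℕ) : PolarizationSurjective (ZMod n) B := by
  intro b _
  set t := b 1 1
  have hb_eq : ∀ x y : ZMod n, b x y = ((x.cast : ℤ) * (y.cast : ℤ)) • t := fun x y => by
    have hone : ∀ z : ZMod n, (z.cast : ℤ) • (1 : ZMod n) = z := fun z => by
      rw [zsmul_one, ZMod.intCast_zmod_cast]
    conv_lhs => rw [← hone x, ← hone y]
    rw [map_zsmul, map_zsmul, AddMonoidHom.smul_apply, smul_smul, mul_comm]
  have ht : (n : ℤ) • t = 0 := by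
    rw [← AddMonoidHom.smul_apply, ← map_zsmul, natCast_zsmul, ← Nat.cast_smul_eq_nsmul ℤ]
    simp
  obtain ⟨β, h2β, hnβ⟩ := exists_two_zsmul_eq_and_mul_self_zsmul_eq_zero ht
  set f : ℤ → B := fun a => (a ^ 2) • β
  have hf : Function.Periodic f n := fun a => by
    simp only [f]
    rw [show (a + n) ^ 2 = a ^ 2 + a * n * 2 + n * n by ring, add_smul, add_smul, mul_smul,
      h2β, mul_smul, ht, smul_zero, hnβ, add_zero, add_zero]
  have hpolz : ∀ x y, polz (f ∘ ZMod.cast) x y = b x y := fun x y => by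
    have hcast : (((x + y).cast : ℤ) : ZMod n) = ((x.cast + y.cast : ℤ) : ZMod n) := by
      push_cast [ZMod.intCast_zmod_cast]; rfl
    rw [polz, Function.comp_apply, hf.eq_of_intCast_eq hcast, hb_eq]
    simp only [Function.comp_apply, f]
    rw [show ((x.cast : ℤ) + y.cast) ^ 2 = x.cast ^ 2 + y.cast ^ 2 + x.cast * y.cast * 2 by ring,
      add_smul, add_smul, mul_smul, h2β]
    abel
  refine ⟨f ∘ ZMod.cast, .of_polz_eq b (fun x => ?_) hpolz, hpolz⟩
  have hcast : ((-(x.cast : ℤ) : ℤ) : ZMod n) = (((-x).cast : ℤ) : ZMod n) := by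
    push_cast [ZMod.intCast_zmod_cast]; rfl
  simp only [Function.comp_apply, ← hf.eq_of_intCast_eq hcast, f, neg_sq]

lemma of_finite [DivisibleBy B ℤ] (G : Type*) [AddCommGroup G] [Finite G] :
    PolarizationSurjective G B := by
  obtain ⟨ι, _, n, -, ⟨e⟩⟩ := AddCommGroup.equiv_directSum_zmod_of_finite' G
  exact (directSum fun i => zmod (n i)).of_addEquiv e.symm

end PolarizationSurjective

lemma polarization_surjective (A : Type*) [AddCommGroup A] [Finite A] :
    Function.Surjective (polarization A) := by
  intro L
  set b := symPower2Lift.symm L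
  obtain ⟨γ, hγ, hpolz⟩ := PolarizationSurjective.of_finite A b.1 b.2
  refine ⟨⟨γ, hγ⟩, symPower2_linearMap_ext fun x y => ?_⟩
  rw [← symPower2Lift.apply_symm_apply L, polarization_apply_mk_tmul, symPower2Lift_mk_tmul]
  exact hpolz x y

noncomputable def addCircleAddEquivCircle : 𝕋 ≃+ Additive Circle where
  toEquiv := (AddCircle.homeomorphCircle one_ne_zero).toEquiv.trans Additive.ofMul
  map_add' x y := by
    simp [AddCircle.homeomorphCircle_apply, AddCircle.toCircle_add]

lemma card_addMonoidHom_addCircle (G : Type*) [AddCommGroup G] [Finite G] :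
    Nat.card (G →+ 𝕋) = Nat.card G := by
  cases nonempty_fintype G
  calc Nat.card (G →+ 𝕋) = Nat.card (AddChar G ℂ) :=
        Nat.card_congr <| addCircleAddEquivCircle.addMonoidHomCongrRightEquiv.trans <|
          AddChar.toAddMonoidHomEquiv.symm.trans AddChar.circleEquivComplex.toEquiv
    _ = Nat.card G := by simp only [Nat.card_eq_fintype_card, AddChar.card_eq]

lemma finite_tensorProduct (A B : Type*) [AddCommGroup A] [AddCommGroup B] [Finite A]
    [Module.Finite ℤ B] : Finite (A ⊗[ℤ] B) := by
  have : AddGroup.FG (A ⊗[ℤ] B) :=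
    Module.Finite.iff_addGroup_fg.1 (Module.Finite.tensorProduct ℤ A B)
  refine AddCommGroup.finite_of_fg_isAddTorsion _ fun x =>
    isOfFinAddOrder_iff_nsmul_eq_zero.2 ⟨Nat.card A, Nat.card_pos, ?_⟩
  induction x using TensorProduct.induction_on with
  | zero => simp
  | tmul a b => rw [smul_tmul', card_nsmul_eq_zero', zero_tmul]
  | add u v hu hv => rw [smul_add, hu, hv, add_zero]

/-- For a finite abelian group `A`, `|Quad(A, ℝ/ℤ)| = |A/2A| · |S²(A)|`. -/
theorem card_quadGroup (A : Type*) [AddCommGroup A] [Finite A] :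
    Nat.card (QuadGroup A) = Nat.card (A ⧸ twoSub A) * Nat.card (symPower2 A) := by
  have : Finite (A ⊗[ℤ] A) := finite_tensorProduct A A
  have : Finite (symPower2 A) := Finite.of_surjective _ (Submodule.mkQ_surjective _)
  calc Nat.card (QuadGroup A)
      = Nat.card (QuadGroup A ⧸ (polarization A).ker) * Nat.card (polarization A).ker :=
        AddSubgroup.card_eq_card_quotient_mul_card_addSubgroup _
    _ = Nat.card (symPower2 A →+ 𝕋) * Nat.card (A ⧸ twoSub A →+ 𝕋) := by
        rw [Nat.card_congr (QuotientAddGroup.quotientKerEquivOfSurjective _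
            (polarization_surjective A)).toEquiv,
          Nat.card_congr (kerPolarizationEquiv A),
          Nat.card_congr (addMonoidHomLequivInt (A := symPower2 A) ℤ).toEquiv.symm]
    _ = Nat.card (A ⧸ twoSub A) * Nat.card (symPower2 A) := by
        rw [card_addMonoidHom_addCircle, card_addMonoidHom_addCircle, mul_comm]
end
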